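/- arXiv:2003.02826 — 7 statements merged into one kernel-verified Lean document; each statement's English description precedes it below -/
import Mathlib

section
/- For all real ρ with ρ_min ≤ ρ ≤ ρ_max, where 0 < ρ_min ≤ ρ* ≤ ρ_max, the inequality (ρ - ρ*)²/(2 ρ_max) ≤ ρ·ln(ρ/ρ*) + ρ* - ρ ≤ (ρ - ρ*)²/(2 ρ_min) holds. -/
/-!
Writing `t = ρ / ρstar`, the integrand is `ρstar * klFun t` with `klFun t = t log t + 1 - t`.
The difference `klFun t - (t - 1)² / (2c)` vanishes at `t = 1` and has derivative
`log t - (t - 1) / c`. By `1 - 1/t ≤ log t ≤ t - 1`, this derivative has the sign of `t - 1` on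
`(0, c]` when `c ≥ 1`, and the sign of `1 - t` on `[c, ∞)` when `c ≤ 1`; so the difference is
minimal, resp. maximal, at `t = 1`. Take `c = ρmax / ρstar`, resp. `c = ρmin / ρstar`.
-/

open Real Set InformationTheory

lemma log_le_sub_one_div {s c : ℝ} (hs : 0 < s) (hc : 0 < c) (h : (s - 1) * (c - 1) ≤ 0) :
    log s ≤ (s - 1) / c := by
  have : s - 1 ≤ (s - 1) / c := by
    rw [le_div_iff₀ hc]
    linarith
  linarith [log_le_sub_one_of_pos hs]

lemma sub_one_div_le_log {s c : ℝ} (hs : 0 < s) (hc : 0 < c) (h : 0 ≤ (s - 1) * (c - s)) :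
    (s - 1) / c ≤ log s :=
  calc (s - 1) / c ≤ (s - 1) / s := by
        rw [div_le_div_iff₀ hc hs]
        linarith
    _ = 1 - s⁻¹ := by field_simp
    _ ≤ log s := one_sub_inv_le_log_of_pos hs

lemma hasDerivAt_klFun_sub_sq_div {t : ℝ} (ht : t ≠ 0) (c : ℝ) :
    HasDerivAt (fun s ↦ klFun s - (s - 1) ^ 2 / (2 * c)) (log t - (t - 1) / c) t :=
  (hasDerivAt_klFun ht).sub <|
    ((((hasDerivAt_id' t).sub_const 1).fun_pow 2).div_const (2 * c)).congr_deriv (by ring)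

lemma deriv_klFun_sub_sq_div {t : ℝ} (ht : t ≠ 0) (c : ℝ) :
    deriv (fun s ↦ klFun s - (s - 1) ^ 2 / (2 * c)) t = log t - (t - 1) / c :=
  (hasDerivAt_klFun_sub_sq_div ht c).deriv

lemma differentiableOn_klFun_sub_sq_div {s : Set ℝ} (hs : (0 : ℝ) ∉ s) (c : ℝ) :
    DifferentiableOn ℝ (fun s ↦ klFun s - (s - 1) ^ 2 / (2 * c)) s := fun _ ht ↦
  (hasDerivAt_klFun_sub_sq_div (ne_of_mem_of_not_mem ht hs) c).differentiableAt
    |>.differentiableWithinAt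

lemma sq_sub_one_div_le_klFun {t M : ℝ} (ht : 0 < t) (htM : t ≤ M) (hM : 1 ≤ M) :
    (t - 1) ^ 2 / (2 * M) ≤ klFun t := by
  have hmin : IsMinOn (fun s ↦ klFun s - (s - 1) ^ 2 / (2 * M)) (Ioc 0 M) 1 := by
    refine isMinOn_Ioc_of_deriv (hasDerivAt_klFun_sub_sq_div one_ne_zero M).continuousAt
      (hasDerivAt_klFun_sub_sq_div (by linarith) M).continuousAt
      (differentiableOn_klFun_sub_sq_div (by simp) M)
      (differentiableOn_klFun_sub_sq_div (by simp) M) (fun s ⟨hs0, hs1⟩ ↦ ?_)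
      (fun s ⟨hs1, hsM⟩ ↦ ?_) <;> rw [deriv_klFun_sub_sq_div (by linarith) M]
    · linarith [log_le_sub_one_div (c := M) hs0 (by linarith) (by nlinarith)]
    · linarith [sub_one_div_le_log (c := M) (by linarith) (by linarith) (by nlinarith)]
  simpa [klFun_one] using hmin ⟨ht, htM⟩

lemma klFun_le_sq_sub_one_div {t m : ℝ} (hm : 0 < m) (hmt : m ≤ t) (hm1 : m ≤ 1) :
    klFun t ≤ (t - 1) ^ 2 / (2 * m) := by
  have hmax : IsMaxOn (fun s ↦ klFun s - (s - 1) ^ 2 / (2 * m)) (Ici m) 1 := by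
    refine isMaxOn_Ici_of_deriv (hasDerivAt_klFun_sub_sq_div hm.ne' m).continuousAt
      (hasDerivAt_klFun_sub_sq_div one_ne_zero m).continuousAt
      (differentiableOn_klFun_sub_sq_div (by simp [hm.le]) m)
      (differentiableOn_klFun_sub_sq_div (by simp) m) (fun s ⟨hms, hs1⟩ ↦ ?_)
      (fun s (hs1 : 1 < s) ↦ ?_) <;> rw [deriv_klFun_sub_sq_div (by linarith) m]
    · linarith [sub_one_div_le_log (by linarith) hm (by nlinarith)]
    · linarith [log_le_sub_one_div (by linarith) hm (by nlinarith)]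
  simpa [klFun_one] using hmax hmt

lemma mul_klFun_div {x y : ℝ} (hy : y ≠ 0) : y * klFun (x / y) = x * log (x / y) + y - x := by
  rw [klFun_apply]
  field_simp

lemma mul_sq_sub_one_div {x y c : ℝ} (hy : y ≠ 0) :
    y * ((x / y - 1) ^ 2 / (2 * (c / y))) = (x - y) ^ 2 / (2 * c) := by
  field_simp

lemma sq_sub_div_le_mul_log_div_add_sub {x y M : ℝ} (hx : 0 < x) (hy : 0 < y) (hxM : x ≤ M)
    (hyM : y ≤ M) : (x - y) ^ 2 / (2 * M) ≤ x * log (x / y) + y - x := by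
  rw [← mul_klFun_div hy.ne', ← mul_sq_sub_one_div hy.ne']
  gcongr
  exact sq_sub_one_div_le_klFun (by positivity) (by gcongr) ((one_le_div hy).2 hyM)

lemma mul_log_div_add_sub_le_sq_sub_div {x y m : ℝ} (hm : 0 < m) (hmx : m ≤ x) (hmy : m ≤ y) :
    x * log (x / y) + y - x ≤ (x - y) ^ 2 / (2 * m) := by
  have hy : 0 < y := hm.trans_le hmy
  rw [← mul_klFun_div hy.ne', ← mul_sq_sub_one_div hy.ne']
  gcongr
  exact klFun_le_sq_sub_one_div (by positivity) (by gcongr) ((div_le_one hy).2 hmy)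

/-- Pointwise entropy–quadratic comparison. -/
theorem entropy_quadratic_bounds (ρmin ρmax ρstar ρ : ℝ)
    (h1 : 0 < ρmin) (h2 : ρmin ≤ ρstar) (h3 : ρstar ≤ ρmax)
    (h4 : ρmin ≤ ρ) (h5 : ρ ≤ ρmax) :
    (ρ - ρstar) ^ 2 / (2 * ρmax) ≤ ρ * Real.log (ρ / ρstar) + ρstar - ρ ∧
      ρ * Real.log (ρ / ρstar) + ρstar - ρ ≤ (ρ - ρstar) ^ 2 / (2 * ρmin) :=
  ⟨sq_sub_div_le_mul_log_div_add_sub (h1.trans_le h4) (h1.trans_le h2) h5 h3,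
    mul_log_div_add_sub_le_sq_sub_div h1 h4 h2⟩
end

section
/- Let f : ℝ → ℝ be twice continuously differentiable with |f'(x)| ≤ M and |f''(x)| ≤ M for all x ≥ 0. Then for all x₁, x₂, z₁, z₂ ≥ 0: |f(x₂) - f(x₁) - f(z₂) + f(z₁)| ≤ M|x₂ - x₁ - z₂ + z₁| + M|x₂ - x₁|·|x₁ - z₁| + M|x₂ - x₁|·|z₂ - z₁| + M|x₂ - x₁|². -/
/-!
Write `f x₂ - f x₁ = f'(c) (x₂ - x₁)` and `f z₂ - f z₁ = f'(d) (z₂ - z₁)` by the mean value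
theorem. The second difference is then `f'(d) ((x₂ - x₁) - (z₂ - z₁)) + (f'(c) - f'(d)) (x₂ - x₁)`;
the first term is controlled by the bound on `f'`, the second by the bound on `f''`, which makes
`f'` Lipschitz, together with `|c - d| ≤ |c - x₁| + |x₁ - z₁| + |z₁ - d|`.
-/

open Set

theorem exists_mem_uIcc_sub_eq_deriv_mul {f : ℝ → ℝ} (hf : Differentiable ℝ f) (a b : ℝ) :
    ∃ c ∈ uIcc a b, f b - f a = deriv f c * (b - a) := by
  wlog hab : a < b generalizing a b
  · rcases (not_lt.1 hab).eq_or_lt with rfl | hba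
    · exact ⟨b, left_mem_uIcc, by ring⟩
    · obtain ⟨c, hc, hslope⟩ := this b a hba
      exact ⟨c, uIcc_comm a b ▸ hc, by linarith⟩
  obtain ⟨c, hc, hslope⟩ :=
    exists_deriv_eq_slope f hab hf.continuous.continuousOn hf.differentiableOn
  refine ⟨c, Icc_subset_uIcc (Ioo_subset_Icc_self hc), ?_⟩
  rw [hslope, div_mul_cancel₀ _ (sub_ne_zero.2 hab.ne')]

theorem Convex.abs_second_difference_le {s : Set ℝ} (hs : Convex ℝ s) {f : ℝ → ℝ}
    (hf : Differentiable ℝ f) (hf' : Differentiable ℝ (deriv f)) {M₁ M₂ : ℝ}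
    (h₁ : ∀ x ∈ s, |deriv f x| ≤ M₁) (h₂ : ∀ x ∈ s, |deriv (deriv f) x| ≤ M₂)
    {x₁ x₂ z₁ z₂ : ℝ} (hx₁ : x₁ ∈ s) (hx₂ : x₂ ∈ s) (hz₁ : z₁ ∈ s) (hz₂ : z₂ ∈ s) :
    |f x₂ - f x₁ - f z₂ + f z₁| ≤
      M₁ * |x₂ - x₁ - z₂ + z₁| + M₂ * |x₂ - x₁| * |x₁ - z₁|
        + M₂ * |x₂ - x₁| * |z₂ - z₁| + M₂ * |x₂ - x₁| ^ 2 := by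
  obtain ⟨c, hc, hfx⟩ := exists_mem_uIcc_sub_eq_deriv_mul hf x₁ x₂
  obtain ⟨d, hd, hfz⟩ := exists_mem_uIcc_sub_eq_deriv_mul hf z₁ z₂
  have hcs : c ∈ s := hs.ordConnected.uIcc_subset hx₁ hx₂ hc
  have hds : d ∈ s := hs.ordConnected.uIcc_subset hz₁ hz₂ hd
  have hM₂ : 0 ≤ M₂ := (abs_nonneg _).trans (h₂ c hcs)
  have hlip : |deriv f c - deriv f d| ≤ M₂ * |c - d| := by
    simpa only [Real.norm_eq_abs] using
      hs.norm_image_sub_le_of_norm_deriv_le (fun x _ => hf' x) h₂ hds hcs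
  have hcd : |c - d| ≤ |x₂ - x₁| + |x₁ - z₁| + |z₂ - z₁| :=
    calc |c - d| ≤ |c - z₁| + |z₁ - d| := abs_sub_le c z₁ d
      _ ≤ |c - x₁| + |x₁ - z₁| + |d - z₁| := by
          rw [abs_sub_comm z₁ d]; gcongr; exact abs_sub_le c x₁ z₁
      _ ≤ |x₂ - x₁| + |x₁ - z₁| + |z₂ - z₁| :=
          add_le_add (add_le_add_left (abs_sub_left_of_mem_uIcc hc) _)
            (abs_sub_left_of_mem_uIcc hd)
  calc |f x₂ - f x₁ - f z₂ + f z₁|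
      = |deriv f d * (x₂ - x₁ - z₂ + z₁) + (deriv f c - deriv f d) * (x₂ - x₁)| := by
        congr 1; linear_combination hfx - hfz
    _ ≤ |deriv f d| * |x₂ - x₁ - z₂ + z₁| + |deriv f c - deriv f d| * |x₂ - x₁| := by
        rw [← abs_mul, ← abs_mul]; exact abs_add_le _ _
    _ ≤ M₁ * |x₂ - x₁ - z₂ + z₁| + M₂ * (|x₂ - x₁| + |x₁ - z₁| + |z₂ - z₁|) * |x₂ - x₁| := by
        gcongr
        · exact h₁ d hds
        · exact hlip.trans (by gcongr)
    _ = _ := by ring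

theorem second_difference_estimate_general (M : ℝ) (f : ℝ → ℝ)
    (hf : ContDiff ℝ 2 f)
    (hf1 : ∀ x, 0 ≤ x → |deriv f x| ≤ M)
    (hf2 : ∀ x, 0 ≤ x → |deriv (deriv f) x| ≤ M)
    (x1 x2 z1 z2 : ℝ) (hx1 : 0 ≤ x1) (hx2 : 0 ≤ x2) (hz1 : 0 ≤ z1) (hz2 : 0 ≤ z2) :
    |f x2 - f x1 - f z2 + f z1| ≤
      M * |x2 - x1 - z2 + z1| + M * |x2 - x1| * |x1 - z1|
        + M * |x2 - x1| * |z2 - z1| + M * |x2 - x1| ^ 2 :=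
  (convex_Ici 0).abs_second_difference_le (hf.differentiable two_ne_zero)
    hf.differentiable_deriv_two hf1 hf2 hx1 hx2 hz1 hz2

/-- Second-difference estimate for a C² function with bounded derivatives on `[0,∞)`. -/
theorem second_difference_estimate (M : ℝ) (hM : 0 ≤ M) (f : ℝ → ℝ)
    (hf : ContDiff ℝ 2 f)
    (hf1 : ∀ x, 0 ≤ x → |deriv f x| ≤ M)
    (hf2 : ∀ x, 0 ≤ x → |deriv (deriv f) x| ≤ M)
    (x1 x2 z1 z2 : ℝ) (hx1 : 0 ≤ x1) (hx2 : 0 ≤ x2) (hz1 : 0 ≤ z1) (hz2 : 0 ≤ z2) :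
    |f x2 - f x1 - f z2 + f z1| ≤
      M * |x2 - x1 - z2 + z1| + M * |x2 - x1| * |x1 - z1|
        + M * |x2 - x1| * |z2 - z1| + M * |x2 - x1| ^ 2 :=
  second_difference_estimate_general M f hf hf1 hf2 x1 x2 z1 z2 hx1 hx2 hz1 hz2
end

section
/- Let f : ℝ → ℝ be three times continuously differentiable with |f'(x)| ≤ M, |f''(x)| ≤ M, |f'''(x)| ≤ M for all x ∈ [a, b], where a ≤ b. Then for all x₁, x₂, x₃, x₄ ∈ [a, b]: |3f(x₂) - 3f(x₃) + f(x₄) - f(x₁)| ≤ M|3x₂ + x₄ - 3x₃ - x₁| + (7/6)M(b-a)³ + 3M(b-a)|2x₃ - x₂ - x₄| + M|2x₂ - x₁ - x₃|² + M|2x₃ - x₂ - x₄|². -/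
/-!
Expand `f` to second order around `x1`. On the Taylor polynomial the combination
`3 g(x2) - 3 g(x3) + g(x4) - g(x1)` is computed exactly: with `u = 2 x2 - x1 - x3` and
`v = 2 x3 - x2 - x4`, its quadratic part is `f''(x1)/2 · (u^2 + v^2 - 6 (x3 - x2) v - 2 u v)`,
and `2|u v| ≤ u^2 + v^2`. The Lagrange remainders at `x2, x3, x4` are at most `M (b - a)^3 / 6`
and the one at `x1` vanishes, whence the constant `7/6`.
-/

open Set

theorem abs_sub_taylor_two_le {f : ℝ → ℝ} (hf : ContDiff ℝ 3 f) {C x₀ x : ℝ}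
    (hC : ∀ y ∈ uIcc x₀ x, |deriv (deriv (deriv f)) y| ≤ C) :
    |f x - (f x₀ + deriv f x₀ * (x - x₀) + deriv (deriv f) x₀ * (x - x₀) ^ 2 / 2)| ≤
      C / 6 * |x - x₀| ^ 3 := by
  rcases eq_or_ne x₀ x with rfl | hne
  · simp
  obtain ⟨y, hy, hrem⟩ := taylor_mean_remainder_lagrange_iteratedDeriv (n := 2) hne hf.contDiffOn
  have hwithin (k : ℕ) (hk : k ≤ 3) : iteratedDerivWithin k f (uIcc x₀ x) x₀ = deriv^[k] f x₀ := by
    rw [iteratedDerivWithin_eq_iteratedDeriv (uniqueDiffOn_uIcc hne)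
      (hf.contDiffAt.of_le (by exact_mod_cast hk)) left_mem_uIcc, iteratedDeriv_eq_iterate]
  have htaylor : taylorWithinEval f 2 (uIcc x₀ x) x₀ x =
      f x₀ + deriv f x₀ * (x - x₀) + deriv (deriv f) x₀ * (x - x₀) ^ 2 / 2 := by
    simp only [taylor_within_apply, Finset.sum_range_succ, Finset.sum_range_zero, zero_add,
      smul_eq_mul, Nat.factorial, Nat.cast_one, inv_one, pow_zero, pow_one, mul_one, one_mul,
      hwithin, Function.iterate_zero, id_eq, Function.iterate_succ,
      Function.comp_apply, Nat.succ_eq_add_one, Nat.reduceAdd, Nat.reduceLeDiff, Nat.one_le_ofNat,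
      zero_le]
    ring
  rw [← htaylor, hrem, iteratedDeriv_eq_iterate, abs_div, abs_mul, abs_pow]
  simp only [Nat.reduceAdd, Function.iterate_succ, Function.iterate_zero, id_eq,
    Function.comp_apply, Nat.factorial, Nat.succ_eq_add_one, zero_add, mul_one, Nat.reduceMul,
    Nat.cast_ofNat, Nat.abs_ofNat]
  have hCy := hC y (uIoo_subset_uIcc_self hy)
  calc _ ≤ C * |x - x₀| ^ 3 / 6 := by gcongr
    _ = C / 6 * |x - x₀| ^ 3 := by ring

def thirdDiff (g : ℝ → ℝ) (x₁ x₂ x₃ x₄ : ℝ) : ℝ := 3 * g x₂ - 3 * g x₃ + g x₄ - g x₁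

theorem thirdDiff_add (g h : ℝ → ℝ) (x₁ x₂ x₃ x₄ : ℝ) :
    thirdDiff (g + h) x₁ x₂ x₃ x₄ = thirdDiff g x₁ x₂ x₃ x₄ + thirdDiff h x₁ x₂ x₃ x₄ := by
  simp only [thirdDiff, Pi.add_apply]
  ring

theorem abs_thirdDiff_le_of_abs_le {g : ℝ → ℝ} {ε x₁ x₂ x₃ x₄ : ℝ} (h₁ : g x₁ = 0)
    (h₂ : |g x₂| ≤ ε) (h₃ : |g x₃| ≤ ε) (h₄ : |g x₄| ≤ ε) :
    |thirdDiff g x₁ x₂ x₃ x₄| ≤ 7 * ε := by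
  rw [thirdDiff, h₁, sub_zero]
  calc |3 * g x₂ - 3 * g x₃ + g x₄| ≤ 3 * |g x₂| + 3 * |g x₃| + |g x₄| := by
        grw [abs_add_le, abs_sub, abs_mul, abs_mul, abs_of_pos three_pos]
    _ ≤ 7 * ε := by linarith

theorem abs_thirdDiff_sq_le {x₁ x₂ x₃ x₄ L : ℝ} (hL : |x₃ - x₂| ≤ L) :
    |thirdDiff (fun x => (x - x₁) ^ 2) x₁ x₂ x₃ x₄| ≤
      2 * (|2 * x₂ - x₁ - x₃| ^ 2 + |2 * x₃ - x₂ - x₄| ^ 2 + 3 * L * |2 * x₃ - x₂ - x₄|) := by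
  set u := 2 * x₂ - x₁ - x₃
  set v := 2 * x₃ - x₂ - x₄
  have hQ : thirdDiff (fun x => (x - x₁) ^ 2) x₁ x₂ x₃ x₄ =
      u ^ 2 + v ^ 2 - 6 * ((x₃ - x₂) * v) - 2 * (u * v) := by
    simp only [thirdDiff, u, v]
    ring
  have huv : 2 * |u * v| ≤ |u| ^ 2 + |v| ^ 2 := by
    rw [abs_mul]
    nlinarith [sq_nonneg (|u| - |v|)]
  have hLv : |(x₃ - x₂) * v| ≤ L * |v| := by
    rw [abs_mul]
    gcongr
  rw [hQ, ← sq_abs u, ← sq_abs v, abs_le]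
  constructor <;> linarith [le_abs_self ((x₃ - x₂) * v), neg_abs_le ((x₃ - x₂) * v),
    le_abs_self (u * v), neg_abs_le (u * v), sq_nonneg |u|, sq_nonneg |v|]

theorem abs_thirdDiff_taylor_two_le {c A B x₁ x₂ x₃ x₄ L : ℝ} (hL : |x₃ - x₂| ≤ L) :
    |thirdDiff (fun x => c + A * (x - x₁) + B * (x - x₁) ^ 2 / 2) x₁ x₂ x₃ x₄| ≤
      |A| * |3 * x₂ + x₄ - 3 * x₃ - x₁| +
        |B| * (|2 * x₂ - x₁ - x₃| ^ 2 + |2 * x₃ - x₂ - x₄| ^ 2 + 3 * L * |2 * x₃ - x₂ - x₄|) := by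
  have hsplit : thirdDiff (fun x => c + A * (x - x₁) + B * (x - x₁) ^ 2 / 2) x₁ x₂ x₃ x₄ =
      A * (3 * x₂ + x₄ - 3 * x₃ - x₁) + B / 2 * thirdDiff (fun x => (x - x₁) ^ 2) x₁ x₂ x₃ x₄ := by
    simp only [thirdDiff]
    ring
  rw [hsplit]
  grw [abs_add_le, abs_mul, abs_mul, abs_thirdDiff_sq_le hL, abs_div, abs_two]
  exact le_of_eq (by ring)

/-- Third-order finite difference bound for C³ functions. -/
theorem third_order_fd_bound (M : ℝ) (hM : 0 ≤ M) (f : ℝ → ℝ)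
    (hf : ContDiff ℝ 3 f) (a b : ℝ) (hab : a ≤ b)
    (hf1 : ∀ x ∈ Set.Icc a b, |deriv f x| ≤ M)
    (hf2 : ∀ x ∈ Set.Icc a b, |deriv (deriv f) x| ≤ M)
    (hf3 : ∀ x ∈ Set.Icc a b, |deriv (deriv (deriv f)) x| ≤ M)
    (x1 x2 x3 x4 : ℝ) (h1 : x1 ∈ Set.Icc a b) (h2 : x2 ∈ Set.Icc a b)
    (h3 : x3 ∈ Set.Icc a b) (h4 : x4 ∈ Set.Icc a b) :
    |3 * f x2 - 3 * f x3 + f x4 - f x1| ≤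
      M * |3 * x2 + x4 - 3 * x3 - x1| + (7 / 6) * M * (b - a) ^ 3
        + 3 * M * (b - a) * |2 * x3 - x2 - x4|
        + M * |2 * x2 - x1 - x3| ^ 2 + M * |2 * x3 - x2 - x4| ^ 2 := by
  have hdist : ∀ x ∈ Icc a b, ∀ y ∈ Icc a b, |x - y| ≤ b - a := fun x hx y hy =>
    Real.dist_le_of_mem_Icc hx hy
  set p : ℝ → ℝ := fun x =>
    f x1 + deriv f x1 * (x - x1) + deriv (deriv f) x1 * (x - x1) ^ 2 / 2
  have hp : |thirdDiff p x1 x2 x3 x4| ≤ M * |3 * x2 + x4 - 3 * x3 - x1| +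
      M * (|2 * x2 - x1 - x3| ^ 2 + |2 * x3 - x2 - x4| ^ 2 + 3 * (b - a) * |2 * x3 - x2 - x4|) := by
    have hba : 0 ≤ b - a := sub_nonneg.2 hab
    grw [abs_thirdDiff_taylor_two_le (hdist x3 h3 x2 h2), hf1 x1 h1, hf2 x1 h1]
  have hrem : ∀ x ∈ Icc a b, |(f - p) x| ≤ M / 6 * (b - a) ^ 3 := fun x hx => by
    grw [Pi.sub_apply, abs_sub_taylor_two_le hf fun y hy => hf3 y (uIcc_subset_Icc h1 hx hy),
      hdist x hx x1 h1]
  have hfp : thirdDiff f x1 x2 x3 x4 = thirdDiff p x1 x2 x3 x4 + thirdDiff (f - p) x1 x2 x3 x4 := by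
    rw [← thirdDiff_add, add_sub_cancel]
  calc |3 * f x2 - 3 * f x3 + f x4 - f x1|
      = |thirdDiff p x1 x2 x3 x4 + thirdDiff (f - p) x1 x2 x3 x4| := by rw [← hfp, thirdDiff]
    _ ≤ _ := (abs_add_le _ _).trans <| add_le_add hp <|
        abs_thirdDiff_le_of_abs_le (by simp [p]) (hrem x2 h2) (hrem x3 h3) (hrem x4 h4)
    _ = _ := by ring
end

section
/- Let ρ* > 0, b ∈ ℝ with |b| < ρ*, let f : ℝ → ℝ, let η = p/q with p, q positive integers, and let k be a positive integer. Define ρ(t,x) = ρ* + b sin(2kqπ(x - f(ρ*)t)) and v(t,x) = f(η^{-1} ∫_x^{x+η} ρ(t,s) ds). Then η^{-1} ∫_x^{x+η} ρ(t,s) ds = ρ* for all t ≥ 0, x ∈ ℝ, hence v(t,x) = f(ρ*) is constant, and ρ satisfies ∂ρ/∂t + ∂(ρv)/∂x = 0 and the periodicity ρ(t, x+1) = ρ(t, x) for all t ≥ 0, x ∈ ℝ. -/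
open intervalIntegral

/-! The mean of `sin (A (s - d))` over any window whose length is a whole number of periods
vanishes; with `A = 2kqπ` and `η = p/q` the window length `η` is `kp` periods, so the
non-local velocity is the constant `f ρ*`. The conservation law then reduces to the transport
equation with speed `f ρ*`, which every profile of the form `g (x - c t)` solves. -/

open Real

theorem integral_sin_mul_sub_eq_zero {A L : ℝ} {n : ℤ} (hAL : A * L = n * (2 * π))
    (d x : ℝ) : ∫ s in x..(x + L), sin (A * (s - d)) = 0 := by
  rcases eq_or_ne A 0 with rfl | hA
  · simp
  simp_rw [mul_sub]
  rw [integral_comp_mul_sub (fun y => sin y) hA, integral_sin,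
    show A * (x + L) - A * d = A * x - A * d + n * (2 * π) by rw [← hAL]; ring,
    cos_add_int_mul_two_pi, sub_self, smul_zero]

theorem inv_mul_integral_const_add_mul_sin_mul_sub {A L : ℝ} {n : ℤ} (hL : L ≠ 0)
    (hAL : A * L = n * (2 * π)) (a b d x : ℝ) :
    L⁻¹ * ∫ s in x..(x + L), (a + b * sin (A * (s - d))) = a := by
  rw [integral_add intervalIntegrable_const ((by fun_prop : Continuous fun s =>
      b * sin (A * (s - d))).intervalIntegrable _ _), integral_const_mul,
    integral_sin_mul_sub_eq_zero hAL, integral_const, add_sub_cancel_left, smul_eq_mul,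
    mul_zero, add_zero, inv_mul_cancel_left₀ hL]

theorem deriv_comp_sub_mul_add_deriv_comp_sub_mul_mul {g : ℝ → ℝ} (hg : Differentiable ℝ g)
    (c t x : ℝ) :
    deriv (fun τ => g (x - c * τ)) t + deriv (fun y => g (y - c * t) * c) x = 0 := by
  have htime : HasDerivAt (fun τ => g (x - c * τ)) (deriv g (x - c * t) * -c) t :=
    (hg _).hasDerivAt.comp t (by simpa using ((hasDerivAt_id t).const_mul c).const_sub x)
  have hspace : HasDerivAt (fun y => g (y - c * t) * c) (deriv g (x - c * t) * 1 * c) x :=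
    ((hg _).hasDerivAt.comp x ((hasDerivAt_id' x).sub_const (c * t))).mul_const c
  rw [htime.deriv, hspace.deriv]
  ring

theorem traveling_density_waves_general (ρstar b : ℝ)
    (f : ℝ → ℝ) (p q k : ℕ) (hp : 0 < p) (hq : 0 < q)
    (η : ℝ) (hη : η = (p : ℝ) / q)
    (ρ v : ℝ → ℝ → ℝ)
    (hρdef : ∀ t x : ℝ, ρ t x =
      ρstar + b * Real.sin (2 * k * q * Real.pi * (x - f ρstar * t)))
    (hvdef : ∀ t x : ℝ, v t x = f (η⁻¹ * ∫ s in x..(x + η), ρ t s)) :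
    (∀ t x : ℝ, 0 ≤ t → η⁻¹ * (∫ s in x..(x + η), ρ t s) = ρstar) ∧
    (∀ t x : ℝ, 0 ≤ t → v t x = f ρstar) ∧
    (∀ t x : ℝ, 0 ≤ t →
      deriv (fun τ => ρ τ x) t + deriv (fun y => ρ t y * v t y) x = 0) ∧
    (∀ t x : ℝ, 0 ≤ t → ρ t (x + 1) = ρ t x) := by
  set c := f ρstar
  set A : ℝ := 2 * k * q * π
  have hq0 : (q : ℝ) ≠ 0 := by positivity
  have hη0 : η ≠ 0 := by rw [hη]; positivity
  have hAη : A * η = ((k * p : ℕ) : ℤ) * (2 * π) := by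
    rw [hη]; push_cast; field_simp; ring
  have hmean : ∀ t x, η⁻¹ * ∫ s in x..(x + η), ρ t s = ρstar := fun t x => by
    simp_rw [hρdef]
    exact inv_mul_integral_const_add_mul_sin_mul_sub hη0 hAη _ _ _ _
  have hv : ∀ t x, v t x = c := fun t x => by rw [hvdef, hmean]
  refine ⟨fun t x _ => hmean t x, fun t x _ => hv t x, fun t x _ => ?_, fun t x _ => ?_⟩
  · simp only [hρdef, hv]
    exact deriv_comp_sub_mul_add_deriv_comp_sub_mul_mul (g := fun y => ρstar + b * sin (A * y))
      (by fun_prop) c t x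
  · rw [hρdef, hρdef, show A * (x + 1 - c * t) = A * (x - c * t) + (k * q : ℕ) * (2 * π) by
      push_cast; ring, sin_add_nat_mul_two_pi]

/-- Traveling density waves for the non-local conservation law on a ring road. -/
theorem traveling_density_waves (ρstar b : ℝ) (hρstar : 0 < ρstar) (hb : |b| < ρstar)
    (f : ℝ → ℝ) (p q k : ℕ) (hp : 0 < p) (hq : 0 < q) (hk : 0 < k)
    (η : ℝ) (hη : η = (p : ℝ) / q) (hη1 : η ≤ 1)
    (ρ v : ℝ → ℝ → ℝ)
    (hρdef : ∀ t x : ℝ, ρ t x =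
      ρstar + b * Real.sin (2 * k * q * Real.pi * (x - f ρstar * t)))
    (hvdef : ∀ t x : ℝ, v t x = f (η⁻¹ * ∫ s in x..(x + η), ρ t s)) :
    (∀ t x : ℝ, 0 ≤ t → η⁻¹ * (∫ s in x..(x + η), ρ t s) = ρstar) ∧
    (∀ t x : ℝ, 0 ≤ t → v t x = f ρstar) ∧
    (∀ t x : ℝ, 0 ≤ t →
      deriv (fun τ => ρ τ x) t + deriv (fun y => ρ t y * v t y) x = 0) ∧
    (∀ t x : ℝ, 0 ≤ t → ρ t (x + 1) = ρ t x) :=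
  traveling_density_waves_general ρstar b f p q k hp hq η hη ρ v hρdef hvdef
end

section
/- Let ω : [0,1] → ℝ be nonnegative and non-increasing, N > 2 an integer, h = 1/N, and for ρ ∈ ℝ^N define B_N ρ = Σ_{i=0}^{N-1} ρ_i ∫_{ih}^{(i+1)h} ω(s)ds. Let ρ^{(1)} = (ρ_1, ..., ρ_{N-1}, ρ_0). Then for all ρ with ρ_min ≤ ρ_i ≤ ρ_max (componentwise, with 0 < ρ_min ≤ ρ_max): (∫_0^h ω(s)ds - ∫_{1-h}^1 ω(s)ds)(ρ_min - ρ_0) ≤ B_N ρ^{(1)} - B_N ρ ≤ (∫_0^h ω(s)ds - ∫_{1-h}^1 ω(s)ds)(ρ_max - ρ_0). -/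
/-!
Summation by parts turns `B_N ρ⁽¹⁾ - B_N ρ` into `∑ (ρ_{i+1} - ρ_0) (I_i - I_{i+1})`, where `I_i` is the
integral of `ω` over the `i`-th cell. Since `ω` is non-increasing, `I_{i+1}` is the integral of the
smaller function `ω(· + h)` over the `i`-th cell, so the weights `I_i - I_{i+1}` are nonnegative; they
telescope to `I_0 - I_{N-1}`, and bounding `ρ_{i+1}` by `ρmin` and `ρmax` gives the two inequalities.
-/

open Finset intervalIntegral

lemma sum_range_sub_mul_add_eq_sum_mul_sub (r w : ℕ → ℝ) (n : ℕ) :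
    ∑ i ∈ range n, (r (i + 1) - r i) * w i + (r 0 - r n) * w n
      = ∑ i ∈ range n, (r (i + 1) - r 0) * (w i - w (i + 1)) := by
  induction n with
  | zero => simp
  | succ n ih =>
    rw [sum_range_succ, sum_range_succ]
    linear_combination ih

lemma sum_range_cyclic_shift_sub_mul (r w : ℕ → ℝ) (n : ℕ) :
    ∑ i ∈ range (n + 1), (r ((i + 1) % (n + 1)) - r i) * w i
      = ∑ i ∈ range n, (r (i + 1) - r 0) * (w i - w (i + 1)) := by
  rw [sum_range_succ, Nat.mod_self, ← sum_range_sub_mul_add_eq_sum_mul_sub]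
  congr 1
  refine sum_congr rfl fun i hi => ?_
  rw [Nat.mod_eq_of_lt (by simpa using hi)]

lemma sum_mul_sub_succ_mem_Icc {w x : ℕ → ℝ} {n : ℕ} {a b : ℝ}
    (hw : ∀ i < n, w (i + 1) ≤ w i) (hx : ∀ i < n, a ≤ x i ∧ x i ≤ b) :
    (w 0 - w n) * a ≤ ∑ i ∈ range n, x i * (w i - w (i + 1)) ∧
      ∑ i ∈ range n, x i * (w i - w (i + 1)) ≤ (w 0 - w n) * b := by
  have hw' : ∀ i ∈ range n, 0 ≤ w i - w (i + 1) := fun i hi => sub_nonneg.2 (hw i (mem_range.1 hi))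
  rw [← sum_range_sub' w n, sum_mul, sum_mul]
  constructor <;> refine sum_le_sum fun i hi => ?_ <;> rw [mul_comm (w i - w (i + 1))]
  · exact mul_le_mul_of_nonneg_right (hx i (mem_range.1 hi)).1 (hw' i hi)
  · exact mul_le_mul_of_nonneg_right (hx i (mem_range.1 hi)).2 (hw' i hi)

lemma integral_comp_add_right_le_of_antitoneOn {f : ℝ → ℝ} {a b c d h : ℝ}
    (hf : AntitoneOn f (Set.Icc c d)) (hca : c ≤ a) (hab : a ≤ b) (hh : 0 ≤ h) (hbd : b + h ≤ d) :
    ∫ s in (a + h)..(b + h), f s ≤ ∫ s in a..b, f s := by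
  have hshift : AntitoneOn (fun s => f (s + h)) (Set.uIcc a b) := by
    rw [Set.uIcc_of_le hab]
    exact fun s hs t ht hst => hf ⟨by linarith [hs.1], by linarith [hs.2]⟩
      ⟨by linarith [ht.1], by linarith [ht.2]⟩ (by linarith)
  have hsub : Set.uIcc a b ⊆ Set.Icc c d := by
    rw [Set.uIcc_of_le hab]; exact Set.Icc_subset_Icc hca (by linarith)
  rw [← integral_comp_add_right]
  refine integral_mono_on hab hshift.intervalIntegrable (hf.mono hsub).intervalIntegrable
    fun s hs => hf ⟨by linarith [hs.1], by linarith [hs.2]⟩ ⟨by linarith [hs.1], by linarith [hs.2]⟩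
      (by linarith)

noncomputable def cellIntegral (ω : ℝ → ℝ) (h : ℝ) (i : ℕ) : ℝ :=
  ∫ s in (i * h)..((i + 1) * h), ω s

lemma cellIntegral_succ_le {ω : ℝ → ℝ} {h : ℝ} {i : ℕ} (hω : AntitoneOn ω (Set.Icc 0 1))
    (hh : 0 ≤ h) (hi : (i + 2) * h ≤ 1) :
    cellIntegral ω h (i + 1) ≤ cellIntegral ω h i := by
  have hshift := integral_comp_add_right_le_of_antitoneOn hω (by positivity : (0 : ℝ) ≤ i * h)
    (by nlinarith : (i : ℝ) * h ≤ (i + 1) * h) hh (by linarith)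
  unfold cellIntegral
  push_cast
  convert hshift using 2 <;> ring

theorem BN_shift_difference_bounds_general (ω : ℝ → ℝ)
    (hmono : ∀ s t : ℝ, 0 ≤ s → s ≤ t → t ≤ 1 → ω t ≤ ω s)
    (N : ℕ) (hN : 2 < N) (h : ℝ) (hh : h = 1 / N)
    (ρ : ℕ → ℝ) (ρmin ρmax : ℝ)
    (hbound : ∀ i, i < N → ρmin ≤ ρ i ∧ ρ i ≤ ρmax)
    (B : (ℕ → ℝ) → ℝ)
    (hB : ∀ r : ℕ → ℝ, B r =
      ∑ i ∈ Finset.range N, r i * ∫ s in ((i : ℝ) * h)..(((i : ℝ) + 1) * h), ω s)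
    (ρ1 : ℕ → ℝ) (hρ1 : ∀ i, ρ1 i = ρ ((i + 1) % N)) :
    ((∫ s in (0:ℝ)..h, ω s) - ∫ s in (1 - h)..1, ω s) * (ρmin - ρ 0) ≤ B ρ1 - B ρ ∧
      B ρ1 - B ρ ≤ ((∫ s in (0:ℝ)..h, ω s) - ∫ s in (1 - h)..1, ω s) * (ρmax - ρ 0) := by
  obtain ⟨n, rfl⟩ : ∃ n, N = n + 1 := ⟨N - 1, by omega⟩
  set I := cellIntegral ω h
  have hh0 : 0 ≤ h := by rw [hh]; positivity
  have hnh : ((n : ℝ) + 1) * h = 1 := by rw [hh]; push_cast; field_simp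
  have hdiff : B ρ1 - B ρ = ∑ i ∈ range n, (ρ (i + 1) - ρ 0) * (I i - I (i + 1)) := by
    rw [hB, hB, ← sum_sub_distrib, ← sum_range_cyclic_shift_sub_mul]
    exact sum_congr rfl fun i _ => by rw [hρ1, sub_mul]; rfl
  have hI0 : I 0 = ∫ s in (0 : ℝ)..h, ω s := by simp [I, cellIntegral]
  have hIn : I n = ∫ s in (1 - h)..1, ω s := by
    simp only [I, cellIntegral]; congr 1; linarith
  have hIanti : ∀ i < n, I (i + 1) ≤ I i := fun i hi =>
    cellIntegral_succ_le (fun s hs t ht hst => hmono s t hs.1 hst ht.2) hh0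
      (by nlinarith [(by exact_mod_cast hi : (i : ℝ) + 1 ≤ n)])
  rw [hdiff, ← hI0, ← hIn]
  refine sum_mul_sub_succ_mem_Icc hIanti fun i hi => ?_
  have hρi := hbound (i + 1) (by omega)
  constructor <;> linarith [hρi.1, hρi.2]

/-- Shift-difference estimate for the discrete convolution operator `B_N`. -/
theorem BN_shift_difference_bounds (ω : ℝ → ℝ)
    (hω0 : ∀ s ∈ Set.Icc (0:ℝ) 1, 0 ≤ ω s)
    (hmono : ∀ s t : ℝ, 0 ≤ s → s ≤ t → t ≤ 1 → ω t ≤ ω s)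
    (N : ℕ) (hN : 2 < N) (h : ℝ) (hh : h = 1 / N)
    (ρ : ℕ → ℝ) (ρmin ρmax : ℝ) (h0 : 0 < ρmin) (h1 : ρmin ≤ ρmax)
    (hbound : ∀ i, i < N → ρmin ≤ ρ i ∧ ρ i ≤ ρmax)
    (B : (ℕ → ℝ) → ℝ)
    (hB : ∀ r : ℕ → ℝ, B r =
      ∑ i ∈ Finset.range N, r i * ∫ s in ((i : ℝ) * h)..(((i : ℝ) + 1) * h), ω s)
    (ρ1 : ℕ → ℝ) (hρ1 : ∀ i, ρ1 i = ρ ((i + 1) % N)) :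
    ((∫ s in (0:ℝ)..h, ω s) - ∫ s in (1 - h)..1, ω s) * (ρmin - ρ 0) ≤ B ρ1 - B ρ ∧
      B ρ1 - B ρ ≤ ((∫ s in (0:ℝ)..h, ω s) - ∫ s in (1 - h)..1, ω s) * (ρmax - ρ 0) :=
  BN_shift_difference_bounds_general ω hmono N hN h hh ρ ρmin ρmax hbound B hB ρ1 hρ1
end

section
/- Let M ≥ 0, ω, ω̃ : [0,1] → [0,∞) non-increasing, f, g : ℝ → ℝ with |f'| ≤ M, |g'| ≤ M, |f| ≤ M, |g| ≤ M on [0,∞). For 1-periodic continuous positive functions ρ, ρ̄ on ℝ and η, ζ ∈ (0,1], define (K(ρ))(x) = f(∫_x^{x+η} ω(s-x)ρ(s)ds) · g(∫_{x-ζ}^x ω̃(x-s)ρ(s)ds). Then for all x: |(K(ρ))(x) - (K(ρ̄))(x)| ≤ M²(ω(0) + ω̃(0)) (∫_0^1 |ρ(s) - ρ̄(s)|² ds)^{1/2}. -/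
/-!
Both arguments of `f` and `g` are integrals of the density against weights bounded by `ω 0` and
`ωt 0` over windows of length at most one. By periodicity the integral of `|ρ - ρb|` over such a
window is at most `∫₀¹ |ρ - ρb|`, and Cauchy–Schwarz bounds this by the `L²` norm. Since the
densities are positive, all arguments lie in `[0, ∞)`, where the mean value theorem and the bounds
on `f` and `g` apply to `f A g B - f A' g B' = (f A - f A') g B + f A' (g B - g B')`.
-/

open intervalIntegral MeasureTheory Set

lemma Function.Periodic.intervalIntegral_le_of_le_add_period {h : ℝ → ℝ} {T a b : ℝ}
    (hper : Function.Periodic h T) (hnonneg : ∀ s, 0 ≤ h s)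
    (hint : IntervalIntegrable h volume a (a + T)) (hab : a ≤ b) (hba : b ≤ a + T) :
    ∫ s in a..b, h s ≤ ∫ s in (0:ℝ)..T, h s :=
  calc ∫ s in a..b, h s ≤ ∫ s in a..(a + T), h s :=
        integral_mono_interval le_rfl hab hba (Filter.Eventually.of_forall hnonneg) hint
    _ = ∫ s in (0:ℝ)..T, h s := by simpa using hper.intervalIntegral_add_eq a 0

lemma sq_intervalIntegral_le_integral_sq {d : ℝ → ℝ} (hd : Continuous d) :
    (∫ s in (0:ℝ)..1, d s) ^ 2 ≤ ∫ s in (0:ℝ)..1, d s ^ 2 := by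
  set c := ∫ s in (0:ℝ)..1, d s
  have hvar : ∫ s in (0:ℝ)..1, (d s - c) ^ 2 = (∫ s in (0:ℝ)..1, d s ^ 2) - c ^ 2 := by
    simp only [sub_sq]
    rw [intervalIntegral.integral_add, intervalIntegral.integral_sub,
      intervalIntegral.integral_const, intervalIntegral.integral_mul_const,
      intervalIntegral.integral_const_mul]
    · simp only [c]; ring
    all_goals exact Continuous.intervalIntegrable (by fun_prop) _ _
  have : 0 ≤ ∫ s in (0:ℝ)..1, (d s - c) ^ 2 :=
    integral_nonneg zero_le_one fun s _ => sq_nonneg (d s - c)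
  linarith

lemma abs_integral_mul_sub_integral_mul_le {w u v : ℝ → ℝ} {a b T W : ℝ} (hab : a ≤ b)
    (hba : b ≤ a + T) (hw : IntervalIntegrable w volume a b) (hwW : ∀ s ∈ Icc a b, |w s| ≤ W)
    (hu : Continuous u) (hv : Continuous v)
    (hup : Function.Periodic u T) (hvp : Function.Periodic v T) :
    |(∫ s in a..b, w s * u s) - ∫ s in a..b, w s * v s| ≤ W * ∫ s in (0:ℝ)..T, |u s - v s| := by
  have hW : 0 ≤ W := (abs_nonneg _).trans (hwW a ⟨le_rfl, hab⟩)
  have hd : Continuous fun s => |u s - v s| := (hu.sub hv).abs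
  have hdp : Function.Periodic (fun s => |u s - v s|) T := fun s => by simp only [hup s, hvp s]
  rw [← integral_sub (hw.mul_continuousOn hu.continuousOn) (hw.mul_continuousOn hv.continuousOn)]
  calc |∫ s in a..b, w s * u s - w s * v s|
      ≤ ∫ s in a..b, W * |u s - v s| := by
        rw [← Real.norm_eq_abs]
        refine norm_integral_le_of_norm_le hab (Filter.Eventually.of_forall fun s hs => ?_)
          ((hd.intervalIntegrable a b).const_mul W)
        rw [← mul_sub, Real.norm_eq_abs, abs_mul]
        exact mul_le_mul_of_nonneg_right (hwW s (Ioc_subset_Icc_self hs)) (abs_nonneg _)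
    _ = W * ∫ s in a..b, |u s - v s| := integral_const_mul _ _
    _ ≤ W * ∫ s in (0:ℝ)..T, |u s - v s| := by
        gcongr
        exact hdp.intervalIntegral_le_of_le_add_period
          (fun s => abs_nonneg _) (hd.intervalIntegrable _ _) hab hba

lemma abs_mul_sub_mul_le_of_abs_deriv_le {f g : ℝ → ℝ} {M : ℝ}
    (hfd : Differentiable ℝ f) (hgd : Differentiable ℝ g)
    (hf' : ∀ x, 0 ≤ x → |deriv f x| ≤ M) (hg' : ∀ x, 0 ≤ x → |deriv g x| ≤ M)
    {a a' b b' : ℝ} (ha : 0 ≤ a) (ha' : 0 ≤ a') (hb : 0 ≤ b) (hb' : 0 ≤ b')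
    (hfa' : |f a'| ≤ M) (hgb : |g b| ≤ M) :
    |f a * g b - f a' * g b'| ≤ M ^ 2 * (|a - a'| + |b - b'|) := by
  have hM : 0 ≤ M := (abs_nonneg _).trans hfa'
  have lipschitz : ∀ {h : ℝ → ℝ}, Differentiable ℝ h → (∀ x, 0 ≤ x → |deriv h x| ≤ M) →
      ∀ {x y : ℝ}, 0 ≤ x → 0 ≤ y → |h x - h y| ≤ M * |x - y| :=
    fun hd hh' _ _ hx hy => (convex_Ici 0).norm_image_sub_le_of_norm_deriv_le
      (fun z _ => hd z) hh' hy hx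
  calc |f a * g b - f a' * g b'|
      = |(f a - f a') * g b + f a' * (g b - g b')| := by congr 1; ring
    _ ≤ |f a - f a'| * |g b| + |f a'| * |g b - g b'| := by
        rw [← abs_mul, ← abs_mul]; exact abs_add_le _ _
    _ ≤ M * |a - a'| * M + M * (M * |b - b'|) := by
        gcongr
        exacts [lipschitz hfd hf' ha ha', lipschitz hgd hg' hb hb']
    _ = M ^ 2 * (|a - a'| + |b - b'|) := by ring

lemma AntitoneOn.abs_le_apply_zero {ω : ℝ → ℝ} (hω : AntitoneOn ω (Icc 0 1))
    (hpos : ∀ s ∈ Icc (0:ℝ) 1, 0 ≤ ω s) {s : ℝ} (hs : s ∈ Icc (0:ℝ) 1) : |ω s| ≤ ω 0 := by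
  rw [abs_of_nonneg (hpos s hs)]
  exact hω ⟨le_rfl, zero_le_one⟩ hs hs.1

section Windows

variable {ω u v : ℝ → ℝ} {η : ℝ}

lemma integral_comp_sub_right_mul_nonneg (hpos : ∀ s ∈ Icc (0:ℝ) 1, 0 ≤ ω s)
    (hη0 : 0 ≤ η) (hη1 : η ≤ 1) (x : ℝ) (hu : ∀ s, 0 ≤ u s) :
    0 ≤ ∫ s in x..(x + η), ω (s - x) * u s :=
  integral_nonneg (by linarith) fun s hs =>
    mul_nonneg (hpos _ ⟨by linarith [hs.1], by linarith [hs.2]⟩) (hu s)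

lemma integral_comp_sub_left_mul_nonneg (hpos : ∀ s ∈ Icc (0:ℝ) 1, 0 ≤ ω s)
    (hη0 : 0 ≤ η) (hη1 : η ≤ 1) (x : ℝ) (hu : ∀ s, 0 ≤ u s) :
    0 ≤ ∫ s in (x - η)..x, ω (x - s) * u s :=
  integral_nonneg (by linarith) fun s hs =>
    mul_nonneg (hpos _ ⟨by linarith [hs.2], by linarith [hs.1]⟩) (hu s)

lemma abs_integral_comp_sub_right_mul_sub_le (hω : AntitoneOn ω (Icc 0 1))
    (hpos : ∀ s ∈ Icc (0:ℝ) 1, 0 ≤ ω s) (hη0 : 0 ≤ η) (hη1 : η ≤ 1) (x : ℝ)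
    (hu : Continuous u) (hv : Continuous v)
    (hup : Function.Periodic u 1) (hvp : Function.Periodic v 1) :
    |(∫ s in x..(x + η), ω (s - x) * u s) - ∫ s in x..(x + η), ω (s - x) * v s| ≤
      ω 0 * ∫ s in (0:ℝ)..1, |u s - v s| := by
  have hint : IntervalIntegrable ω volume 0 η :=
    (hω.mono (uIcc_subset_Icc ⟨le_rfl, zero_le_one⟩ ⟨hη0, hη1⟩)).intervalIntegrable
  exact abs_integral_mul_sub_integral_mul_le (by linarith) (by linarith)
    (by simpa [add_comm] using hint.comp_sub_right x)
    (fun s hs => hω.abs_le_apply_zero hpos ⟨by linarith [hs.1], by linarith [hs.2]⟩)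
    hu hv hup hvp

lemma abs_integral_comp_sub_left_mul_sub_le (hω : AntitoneOn ω (Icc 0 1))
    (hpos : ∀ s ∈ Icc (0:ℝ) 1, 0 ≤ ω s) (hη0 : 0 ≤ η) (hη1 : η ≤ 1) (x : ℝ)
    (hu : Continuous u) (hv : Continuous v)
    (hup : Function.Periodic u 1) (hvp : Function.Periodic v 1) :
    |(∫ s in (x - η)..x, ω (x - s) * u s) - ∫ s in (x - η)..x, ω (x - s) * v s| ≤
      ω 0 * ∫ s in (0:ℝ)..1, |u s - v s| := by
  have hint : IntervalIntegrable ω volume 0 η :=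
    (hω.mono (uIcc_subset_Icc ⟨le_rfl, zero_le_one⟩ ⟨hη0, hη1⟩)).intervalIntegrable
  exact abs_integral_mul_sub_integral_mul_le (by linarith) (by linarith)
    (by simpa using (hint.comp_sub_left x).symm)
    (fun s hs => hω.abs_le_apply_zero hpos ⟨by linarith [hs.2], by linarith [hs.1]⟩)
    hu hv hup hvp

end Windows

theorem nonlocal_speed_L2_lipschitz_general (M : ℝ)
    (ω ωt : ℝ → ℝ)
    (hωpos : ∀ s ∈ Set.Icc (0:ℝ) 1, 0 ≤ ω s)
    (hωtpos : ∀ s ∈ Set.Icc (0:ℝ) 1, 0 ≤ ωt s)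
    (hωmono : ∀ s t : ℝ, 0 ≤ s → s ≤ t → t ≤ 1 → ω t ≤ ω s)
    (hωtmono : ∀ s t : ℝ, 0 ≤ s → s ≤ t → t ≤ 1 → ωt t ≤ ωt s)
    (f g : ℝ → ℝ) (hfd : Differentiable ℝ f) (hgd : Differentiable ℝ g)
    (hf' : ∀ x : ℝ, 0 ≤ x → |deriv f x| ≤ M)
    (hg' : ∀ x : ℝ, 0 ≤ x → |deriv g x| ≤ M)
    (hfb : ∀ x : ℝ, 0 ≤ x → |f x| ≤ M)
    (hgb : ∀ x : ℝ, 0 ≤ x → |g x| ≤ M)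
    (η ζ : ℝ) (hη0 : 0 < η) (hη1 : η ≤ 1) (hζ0 : 0 < ζ) (hζ1 : ζ ≤ 1)
    (ρ ρb : ℝ → ℝ) (hρc : Continuous ρ) (hρbc : Continuous ρb)
    (hρper : ∀ x : ℝ, ρ (x + 1) = ρ x) (hρbper : ∀ x : ℝ, ρb (x + 1) = ρb x)
    (hρpos : ∀ x : ℝ, 0 < ρ x) (hρbpos : ∀ x : ℝ, 0 < ρb x)
    (K : (ℝ → ℝ) → ℝ → ℝ)
    (hK : ∀ (r : ℝ → ℝ) (x : ℝ), K r x =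
      f (∫ s in x..(x + η), ω (s - x) * r s) * g (∫ s in (x - ζ)..x, ωt (x - s) * r s)) :
    ∀ x : ℝ, |K ρ x - K ρb x| ≤
      M ^ 2 * (ω 0 + ωt 0) * Real.sqrt (∫ s in (0:ℝ)..1, |ρ s - ρb s| ^ 2) := by
  intro x
  have hω : AntitoneOn ω (Icc 0 1) := fun s hs t ht hst => hωmono s t hs.1 hst ht.2
  have hωt : AntitoneOn ωt (Icc 0 1) := fun s hs t ht hst => hωtmono s t hs.1 hst ht.2
  have hA0 := integral_comp_sub_right_mul_nonneg hωpos hη0.le hη1 x fun s => (hρpos s).le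
  have hAb0 := integral_comp_sub_right_mul_nonneg hωpos hη0.le hη1 x fun s => (hρbpos s).le
  have hB0 := integral_comp_sub_left_mul_nonneg hωtpos hζ0.le hζ1 x fun s => (hρpos s).le
  have hBb0 := integral_comp_sub_left_mul_nonneg hωtpos hζ0.le hζ1 x fun s => (hρbpos s).le
  set L := ∫ s in (0:ℝ)..1, |ρ s - ρb s|
  have hA := abs_integral_comp_sub_right_mul_sub_le hω hωpos hη0.le hη1 x hρc hρbc hρper hρbper
  have hB := abs_integral_comp_sub_left_mul_sub_le hωt hωtpos hζ0.le hζ1 x hρc hρbc hρper hρbper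
  have hL : L ≤ Real.sqrt (∫ s in (0:ℝ)..1, |ρ s - ρb s| ^ 2) :=
    (le_abs_self L).trans (Real.abs_le_sqrt (sq_intervalIntegral_le_integral_sq (by fun_prop)))
  have hW : 0 ≤ M ^ 2 * (ω 0 + ωt 0) := by
    have := hωpos 0 ⟨le_rfl, zero_le_one⟩
    have := hωtpos 0 ⟨le_rfl, zero_le_one⟩
    positivity
  rw [hK, hK]
  calc _ ≤ M ^ 2 * (ω 0 * L + ωt 0 * L) :=
        (abs_mul_sub_mul_le_of_abs_deriv_le hfd hgd hf' hg' hA0 hAb0 hB0 hBb0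
          (hfb _ hAb0) (hgb _ hB0)).trans
          (mul_le_mul_of_nonneg_left (add_le_add hA hB) (sq_nonneg M))
    _ = M ^ 2 * (ω 0 + ωt 0) * L := by ring
    _ ≤ _ := mul_le_mul_of_nonneg_left hL hW

/-- Lipschitz-type estimate for the non-local speed mapping in the L² norm. -/
theorem nonlocal_speed_L2_lipschitz (M : ℝ) (hM : 0 ≤ M)
    (ω ωt : ℝ → ℝ)
    (hωpos : ∀ s ∈ Set.Icc (0:ℝ) 1, 0 ≤ ω s)
    (hωtpos : ∀ s ∈ Set.Icc (0:ℝ) 1, 0 ≤ ωt s)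
    (hωmono : ∀ s t : ℝ, 0 ≤ s → s ≤ t → t ≤ 1 → ω t ≤ ω s)
    (hωtmono : ∀ s t : ℝ, 0 ≤ s → s ≤ t → t ≤ 1 → ωt t ≤ ωt s)
    (f g : ℝ → ℝ) (hfd : Differentiable ℝ f) (hgd : Differentiable ℝ g)
    (hf' : ∀ x : ℝ, 0 ≤ x → |deriv f x| ≤ M)
    (hg' : ∀ x : ℝ, 0 ≤ x → |deriv g x| ≤ M)
    (hfb : ∀ x : ℝ, 0 ≤ x → |f x| ≤ M)
    (hgb : ∀ x : ℝ, 0 ≤ x → |g x| ≤ M)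
    (η ζ : ℝ) (hη0 : 0 < η) (hη1 : η ≤ 1) (hζ0 : 0 < ζ) (hζ1 : ζ ≤ 1)
    (ρ ρb : ℝ → ℝ) (hρc : Continuous ρ) (hρbc : Continuous ρb)
    (hρper : ∀ x : ℝ, ρ (x + 1) = ρ x) (hρbper : ∀ x : ℝ, ρb (x + 1) = ρb x)
    (hρpos : ∀ x : ℝ, 0 < ρ x) (hρbpos : ∀ x : ℝ, 0 < ρb x)
    (K : (ℝ → ℝ) → ℝ → ℝ)
    (hK : ∀ (r : ℝ → ℝ) (x : ℝ), K r x =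
      f (∫ s in x..(x + η), ω (s - x) * r s) * g (∫ s in (x - ζ)..x, ωt (x - s) * r s)) :
    ∀ x : ℝ, |K ρ x - K ρb x| ≤
      M ^ 2 * (ω 0 + ωt 0) * Real.sqrt (∫ s in (0:ℝ)..1, |ρ s - ρb s| ^ 2) :=
  nonlocal_speed_L2_lipschitz_general M ω ωt hωpos hωtpos hωmono hωtmono f g hfd hgd hf' hg' hfb hgb
    η ζ hη0 hη1 hζ0 hζ1 ρ ρb hρc hρbc hρper hρbper hρpos hρbpos K hK
end

section
/- Let ρ ∈ C¹([0,∞)×ℝ) be 1-periodic in x and positive, satisfying ∂ρ/∂t + ∂(ρv)/∂x = 0 for some v ∈ C¹ that is 1-periodic in x. Let ρ* = ∫_0^1 ρ(0,x)dx and V(t) = ∫_0^1 (ρ(t,x) ln(ρ(t,x)/ρ*) + ρ* - ρ(t,x)) dx. Then dV/dt(t) = ∫_0^1 (ρ* - ρ(t,x)) (∂v/∂x)(t,x) dx for all t ≥ 0. -/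
/-!
Differentiating under the integral sign, `V' = ∫ ∂ₜρ · log (ρ / ρ*)`, because the entropy density
`r ↦ r log (r / ρ*) + ρ* - r` has derivative `log (r / ρ*)`. The continuity equation replaces
`∂ₜρ` by `-∂ₓ(ρv)`, and the remaining spatial integral is evaluated by an exact derivative:
`ρv log (ρ / ρ*) - ρv + ρ* v` is periodic in `x` with derivative
`∂ₓ(ρv) · log (ρ / ρ*) + (ρ* - ρ) ∂ₓv`, so the latter integrates to zero over a period.
-/

open intervalIntegral

open Function Metric MeasureTheory Real Set

theorem hasDerivAt_intervalIntegral_of_contDiff {F : ℝ × ℝ → ℝ} (hF : ContDiff ℝ 1 F)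
    (a b t : ℝ) :
    HasDerivAt (fun s => ∫ x in a..b, F (s, x)) (∫ x in a..b, deriv (fun s => F (s, x)) t) t := by
  have hpartial : ∀ s x, HasDerivAt (fun s => F (s, x)) (fderiv ℝ F (s, x) (1, 0)) s :=
    fun s x => ((hF.differentiable one_ne_zero) (s, x)).hasFDerivAt.comp_hasDerivAt s
      ((hasDerivAt_id s).prodMk (hasDerivAt_const s x))
  have hpartial_cont : Continuous fun p => fderiv ℝ F p (1, 0) :=
    (hF.continuous_fderiv one_ne_zero).clm_apply continuous_const
  obtain ⟨C, hC⟩ := (isCompact_closedBall t 1 |>.prod isCompact_uIcc).exists_bound_of_continuousOn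
    (hpartial_cont.continuousOn (s := closedBall t 1 ×ˢ uIcc a b))
  have hslice : ∀ s, Continuous fun x => F (s, x) :=
    fun s => hF.continuous.comp (Continuous.prodMk_right s)
  have hderiv := (intervalIntegral.hasDerivAt_integral_of_dominated_loc_of_deriv_le
    (μ := volume) (F' := fun s x => fderiv ℝ F (s, x) (1, 0)) (bound := fun _ => C)
    (ball_mem_nhds t one_pos) (.of_forall fun s => (hslice s).aestronglyMeasurable)
    ((hslice t).intervalIntegrable a b)
    (hpartial_cont.comp (Continuous.prodMk_right t)).aestronglyMeasurable
    (ae_of_all _ fun x hx s hs => hC _ ⟨ball_subset_closedBall hs, uIoc_subset_uIcc hx⟩)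
    intervalIntegrable_const (ae_of_all _ fun x _ s _ => hpartial s x)).2
  simpa only [(hpartial t _).deriv] using hderiv

theorem Function.Periodic.intervalIntegral_eq_zero_of_hasDerivAt {Φ g : ℝ → ℝ} {T : ℝ}
    (hΦ : Periodic Φ T) (hderiv : ∀ x, HasDerivAt Φ (g x) x) (hg : Continuous g) (a : ℝ) :
    ∫ x in a..a + T, g x = 0 := by
  rw [integral_eq_sub_of_hasDerivAt (fun x _ => hderiv x) (hg.intervalIntegrable _ _), hΦ a,
    sub_self]

theorem hasDerivAt_mul_log_div_add_sub {c r : ℝ} (hc : c ≠ 0) (hr : r ≠ 0) :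
    HasDerivAt (fun r => r * log (r / c) + c - r) (log (r / c)) r := by
  have hlog := ((hasDerivAt_id' r).div_const c).log (div_ne_zero hr hc)
  refine ((((hasDerivAt_id' r).mul hlog).add_const c).sub (hasDerivAt_id' r)).congr_deriv ?_
  field_simp
  ring

theorem hasDerivAt_integral_mul_log_div_add_sub {ρ : ℝ → ℝ → ℝ}
    (hρ : ContDiff ℝ 1 (fun p : ℝ × ℝ => ρ p.1 p.2)) (hρ₀ : ∀ t x, ρ t x ≠ 0) {c : ℝ}
    (hc : c ≠ 0) (a b t : ℝ) :
    HasDerivAt (fun s => ∫ x in a..b, ρ s x * log (ρ s x / c) + c - ρ s x)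
      (∫ x in a..b, deriv (fun s => ρ s x) t * log (ρ t x / c)) t := by
  have hF : ContDiff ℝ 1 (fun p : ℝ × ℝ => ρ p.1 p.2 * log (ρ p.1 p.2 / c) + c - ρ p.1 p.2) :=
    ((hρ.mul ((hρ.div_const c).log fun p => div_ne_zero (hρ₀ _ _) hc)).add contDiff_const).sub hρ
  refine (hasDerivAt_intervalIntegral_of_contDiff hF a b t).congr_deriv
    (integral_congr fun x _ => ?_)
  have hslice : HasDerivAt (fun s => ρ s x) (deriv (fun s => ρ s x) t) t :=
    ((hρ.comp (contDiff_prodMk_left x)).differentiable one_ne_zero t).hasDerivAt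
  rw [mul_comm]
  exact ((hasDerivAt_mul_log_div_add_sub hc (hρ₀ t x)).comp t hslice).deriv

theorem intervalIntegral_neg_deriv_mul_mul_log_div {r w : ℝ → ℝ} {c T : ℝ}
    (hr : ContDiff ℝ 1 r) (hw : ContDiff ℝ 1 w) (hr₀ : ∀ x, r x ≠ 0) (hc : c ≠ 0)
    (hr_per : Periodic r T) (hw_per : Periodic w T) (a : ℝ) :
    ∫ x in a..a + T, -deriv (fun y => r y * w y) x * log (r x / c)
      = ∫ x in a..a + T, (c - r x) * deriv w x := by
  have hr' : ∀ x, HasDerivAt r (deriv r x) x :=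
    fun x => (hr.differentiable one_ne_zero x).hasDerivAt
  have hw' : ∀ x, HasDerivAt w (deriv w x) x :=
    fun x => (hw.differentiable one_ne_zero x).hasDerivAt
  have hrw_cont : Continuous fun x => deriv (fun y => r y * w y) x * log (r x / c) :=
    (hr.mul hw).continuous_deriv_one.mul
      ((hr.continuous.div_const c).log fun x => div_ne_zero (hr₀ x) hc)
  have hw_cont : Continuous fun x => (c - r x) * deriv w x :=
    (continuous_const.sub hr.continuous).mul hw.continuous_deriv_one
  have hflux : ∀ x, HasDerivAt (fun y => r y * w y * log (r y / c) - r y * w y + c * w y)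
      (deriv (fun y => r y * w y) x * log (r x / c) + (c - r x) * deriv w x) x := by
    intro x
    have hr₀x := hr₀ x
    have hrw : HasDerivAt (fun y => r y * w y) _ x := (hr' x).mul (hw' x)
    have hlog := ((hr' x).div_const c).log (div_ne_zero hr₀x hc)
    refine (((hrw.mul hlog).sub hrw).add ((hw' x).const_mul c)).congr_deriv ?_
    rw [hrw.deriv]
    field_simp
    ring
  have hflux_per : Periodic (fun y => r y * w y * log (r y / c) - r y * w y + c * w y) T :=
    fun y => by simp only [hr_per y, hw_per y]
  have hzero := hflux_per.intervalIntegral_eq_zero_of_hasDerivAt hflux (hrw_cont.add hw_cont) a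
  rw [integral_add (hrw_cont.intervalIntegrable _ _) (hw_cont.intervalIntegrable _ _)] at hzero
  simp only [neg_mul, intervalIntegral.integral_neg]
  linarith

/-- Time derivative of the relative entropy along the continuity equation on the circle. -/
theorem entropy_derivative (ρ v : ℝ → ℝ → ℝ)
    (hρ : ContDiff ℝ 1 (fun p : ℝ × ℝ => ρ p.1 p.2))
    (hv : ContDiff ℝ 1 (fun p : ℝ × ℝ => v p.1 p.2))
    (hρper : ∀ t x : ℝ, ρ t (x + 1) = ρ t x)
    (hvper : ∀ t x : ℝ, v t (x + 1) = v t x)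
    (hρpos : ∀ t x : ℝ, 0 < ρ t x)
    (hpde : ∀ t x : ℝ, 0 ≤ t →
      deriv (fun τ => ρ τ x) t + deriv (fun y => ρ t y * v t y) x = 0)
    (ρstar : ℝ) (hρstar : ρstar = ∫ x in (0:ℝ)..1, ρ 0 x)
    (V : ℝ → ℝ)
    (hV : ∀ t : ℝ, V t =
      ∫ x in (0:ℝ)..1, (ρ t x * Real.log (ρ t x / ρstar) + ρstar - ρ t x)) :
    ∀ t : ℝ, 0 ≤ t →
      deriv V t = ∫ x in (0:ℝ)..1, (ρstar - ρ t x) * deriv (fun y => v t y) x := by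
  intro t ht
  have hρ₀ : ∀ t x, ρ t x ≠ 0 := fun t x => (hρpos t x).ne'
  have hρstar_pos : 0 < ρstar := hρstar ▸ intervalIntegral_pos_of_pos_on
    ((hρ.continuous.comp (Continuous.prodMk_right 0)).intervalIntegrable 0 1)
    (fun x _ => hρpos 0 x) zero_lt_one
  have hslice : ∀ f : ℝ → ℝ → ℝ, ContDiff ℝ 1 (fun p : ℝ × ℝ => f p.1 p.2) →
      ContDiff ℝ 1 (f t) := fun f hf => hf.comp (contDiff_prodMk_right t)
  calc deriv V t
      = ∫ x in (0:ℝ)..1, deriv (fun s => ρ s x) t * log (ρ t x / ρstar) := by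
        rw [funext hV]
        exact (hasDerivAt_integral_mul_log_div_add_sub hρ hρ₀ hρstar_pos.ne' 0 1 t).deriv
    _ = ∫ x in (0:ℝ)..1, -deriv (fun y => ρ t y * v t y) x * log (ρ t x / ρstar) :=
        integral_congr fun x _ => by rw [eq_neg_of_add_eq_zero_left (hpde t x ht)]
    _ = ∫ x in (0:ℝ)..1, (ρstar - ρ t x) * deriv (fun y => v t y) x := by
        simpa only [zero_add] using intervalIntegral_neg_deriv_mul_mul_log_div (hslice ρ hρ)
          (hslice v hv) (hρ₀ t) hρstar_pos.ne' (hρper t) (hvper t) 0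
end
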